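/- Suppose ρ : [0, T] → ℝ and Θ : [0, T] → ℝ are differentiable, Θ satisfies 0 < k ≤ Θ(t) ≤ K for all t, ρ(0) = ρ₀ > 0, and d/dt(ρΘ) ≥ −a ρ for some constant a > 0. Then ρ(t) ≥ (ρ₀ Θ(0) / K) · e^{−(a/k) t} for all t ∈ [0, T]; in particular ρ never vanishes on [0, T]. -/

import Mathlib

open Real Set

theorem stmt_6 (T a k K ρ₀ : ℝ) (ρ Θ : ℝ → ℝ)
    (hρ : ∀ t ∈ Icc (0:ℝ) T, DifferentiableAt ℝ ρ t)
    (hΘ : ∀ t ∈ Icc (0:ℝ) T, DifferentiableAt ℝ Θ t)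
    (hk : 0 < k) (hkK : k ≤ K)
    (hΘbd : ∀ t ∈ Icc (0:ℝ) T, k ≤ Θ t ∧ Θ t ≤ K)
    (ha : 0 < a)
    (hρ0 : ρ 0 = ρ₀) (hρ0pos : 0 < ρ₀)
    (hineq : ∀ t ∈ Icc (0:ℝ) T, -a * ρ t ≤ deriv (fun s => ρ s * Θ s) t) :
    ∀ t ∈ Icc (0:ℝ) T,
      (ρ₀ * Θ 0 / K) * Real.exp (-(a/k) * t) ≤ ρ t ∧ ρ t ≠ 0 := by
  intro t ht
  have h0T : (0:ℝ) ∈ Icc (0:ℝ) T := ⟨le_refl 0, le_trans ht.1 ht.2⟩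
  set c : ℝ := ρ₀ * Θ 0 with hc
  have hΘ0 : 0 < Θ 0 := lt_of_lt_of_le hk (hΘbd 0 h0T).1
  have hcpos : 0 < c := mul_pos hρ0pos hΘ0
  set u : ℝ → ℝ := fun s => ρ s * Θ s with hu
  -- key estimate for every ε > 0
  have key : ∀ ε > (0:ℝ), ∀ x ∈ Icc (0:ℝ) T, c * Real.exp (-(a/k + ε) * x) ≤ u x := by
    intro ε hε
    have hfd : ∀ x : ℝ, HasDerivAt (fun s => c * Real.exp (-(a/k + ε) * s))
        (c * Real.exp (-(a/k + ε) * x) * (-(a/k + ε))) x := by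
      intro x
      have h1 : HasDerivAt (fun s : ℝ => -(a/k + ε) * s) (-(a/k + ε)) x := by
        simpa using (hasDerivAt_id x).const_mul (-(a/k + ε))
      have := (h1.exp).const_mul c
      exact this.congr_deriv (by ring)
    have hfcont : ContinuousOn (fun s => c * Real.exp (-(a/k + ε) * s)) (Icc (0:ℝ) T) :=
      fun x _ => (hfd x).continuousAt.continuousWithinAt
    have hfd' : ∀ x ∈ Ico (0:ℝ) T, HasDerivWithinAt (fun s => c * Real.exp (-(a/k + ε) * s))
        (c * Real.exp (-(a/k + ε) * x) * (-(a/k + ε))) (Ici x) x :=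
      fun x _ => (hfd x).hasDerivWithinAt
    have hucont : ContinuousOn u (Icc (0:ℝ) T) := fun x hx =>
      ((hρ x hx).mul (hΘ x hx)).continuousAt.continuousWithinAt
    have huderiv : ∀ x ∈ Ico (0:ℝ) T, HasDerivWithinAt u (deriv u x) (Ici x) x := by
      intro x hx
      exact (((hρ x ⟨hx.1, hx.2.le⟩).mul (hΘ x ⟨hx.1, hx.2.le⟩)).hasDerivAt).hasDerivWithinAt
    have hinit : c * Real.exp (-(a/k + ε) * 0) ≤ u 0 := by
      simp [hu, hc, hρ0]
    have bound : ∀ x ∈ Ico (0:ℝ) T,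
        c * Real.exp (-(a/k + ε) * x) = u x →
        c * Real.exp (-(a/k + ε) * x) * (-(a/k + ε)) < deriv u x := by
      intro x hx heq
      have hxI : x ∈ Icc (0:ℝ) T := ⟨hx.1, hx.2.le⟩
      have hupos : 0 < u x := heq ▸ mul_pos hcpos (Real.exp_pos _)
      have hΘx : 0 < Θ x := lt_of_lt_of_le hk (hΘbd x hxI).1
      have hΘxk : k ≤ Θ x := (hΘbd x hxI).1
      have hρx : 0 < ρ x := by
        by_contra h
        push_neg at h
        have : u x ≤ 0 := mul_nonpos_of_nonpos_of_nonneg h hΘx.le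
        linarith
      have h1 : -a * ρ x ≤ deriv u x := hineq x hxI
      rw [heq]
      have hstep : a * ρ x ≤ ρ x * Θ x * (a/k) := by
        have h3 : a/k * k = a := div_mul_cancel₀ a hk.ne'
        nlinarith [mul_nonneg (mul_nonneg hρx.le (div_pos ha hk).le) (sub_nonneg.2 hΘxk), h3]
      have h2 : u x * (-(a/k + ε)) < -a * ρ x := by
        have hux : u x = ρ x * Θ x := rfl
        have hpos : 0 < ρ x * Θ x * ε := by positivity
        rw [hux]
        nlinarith [hstep, hpos]
      linarith
    exact fun x hx =>
      image_le_of_deriv_right_lt_deriv_boundary' hfcont hfd' hinit hucont huderiv bound hx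
  -- pass to the limit ε → 0⁺
  have hlim : Filter.Tendsto (fun ε : ℝ => c * Real.exp (-(a/k + ε) * t))
      (nhdsWithin 0 (Set.Ioi 0)) (nhds (c * Real.exp (-(a/k) * t))) := by
    have hcont : Continuous (fun ε : ℝ => c * Real.exp (-(a/k + ε) * t)) := by
      continuity
    have := hcont.tendsto 0
    simp only [add_zero] at this
    exact this.mono_left nhdsWithin_le_nhds
  have hut : c * Real.exp (-(a/k) * t) ≤ u t :=
    le_of_tendsto hlim (Filter.eventually_of_mem self_mem_nhdsWithin
      (fun ε hε => key ε hε t ht))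
  have hupos : 0 < u t := lt_of_lt_of_le (mul_pos hcpos (Real.exp_pos _)) hut
  have hΘt : 0 < Θ t := lt_of_lt_of_le hk (hΘbd t ht).1
  have hρt : 0 < ρ t := by
    by_contra h
    push_neg at h
    have : u t ≤ 0 := mul_nonpos_of_nonpos_of_nonneg h hΘt.le
    linarith
  have hK : 0 < K := lt_of_lt_of_le hk hkK
  refine ⟨?_, hρt.ne'⟩
  rw [div_mul_eq_mul_div, div_le_iff₀ hK]
  calc c * Real.exp (-(a/k) * t) ≤ u t := hut
    _ = ρ t * Θ t := rfl
    _ ≤ ρ t * K := by nlinarith [(hΘbd t ht).2]
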